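/- arXiv:1708.03708 — 2 statements merged into one kernel-verified Lean document; each statement's English description precedes it below -/
import Mathlib

section
/- Let m be a positive integer, B > 0, and 0 < ε ≤ 3. Set λ = ε²/(81B), and let 0 < η ≤ ε³/(729B) and 0 < γ ≤ ε³/(729B). Let K be a real symmetric positive semidefinite m×m matrix, K_γ = K + γmI, and let K̄_γ be a real symmetric positive semidefinite m×m matrix with K̄_γ ⪯ K_γ ⪯ K̄_γ + ηmI. Let Y ∈ ℝ^m with all entries in [0,1], set ᾱ_γ = (K̄_γ + λmI)⁻¹ Y, and let α_B ∈ ℝ^m be any vector with α_BᵀK α_B ≤ B and ‖K α_B − Y‖₂ ≤ √m. Then (1/m)‖K̄_γ ᾱ_γ − Y‖₂² ≤ (1/m)‖K α_B − Y‖₂² + ε. -/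
/-!
Write `t = λm`. The ridge solution `ᾱ_γ` minimises `‖K̄x - Y‖² + t xᵀK̄x`, so it suffices to
exhibit one good comparator `x`. Take the shrunk solution `w = (K + tI)⁻¹ K α_B`: then
`Kw - Y = (Kα_B - Y) - t w` and `wᵀKw + 2t‖w‖² ≤ α_BᵀKα_B ≤ B`. Since `γm, ηm ≤ t`, the sandwich
gives `-tI ⪯ K̄ - K ⪯ tI`, hence `‖(K̄ - K)w‖ ≤ t‖w‖`, so `‖K̄w - Y‖ ≤ ‖Kα_B - Y‖ + 2t‖w‖` and
`t wᵀK̄w ≤ tB`. Finally `tB = ε²m/81` and `t²‖w‖² ≤ tB/2`; with `‖Kα_B - Y‖² ≤ m` and Young's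
inequality on the cross term, the excess over `‖Kα_B - Y‖²` is at most `εm`.
-/

open Matrix

/-- Spectral (operator 2-) norm of a real square matrix. -/
noncomputable def spectralNorm2 {m : ℕ} (A : Matrix (Fin m) (Fin m) ℝ) : ℝ :=
  ‖Matrix.toEuclideanCLM (𝕜 := ℝ) A‖

/-- Euclidean (ℓ²) norm of a vector in ℝ^m. -/
noncomputable def l2norm {m : ℕ} (v : Fin m → ℝ) : ℝ :=
  Real.sqrt (∑ i, v i ^ 2)

section
variable {n : Type*} [Fintype n]

theorem Matrix.IsHermitian.dotProduct_mulVec_comm {A : Matrix n n ℝ} (hA : A.IsHermitian)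
    (x y : n → ℝ) : x ⬝ᵥ (A *ᵥ y) = y ⬝ᵥ (A *ᵥ x) := by
  rw [dotProduct_mulVec, ← mulVec_transpose, ← conjTranspose_eq_transpose_of_trivial, hA.eq,
    dotProduct_comm]

theorem Matrix.dotProduct_self_nonneg {R : Type*} [Ring R] [LinearOrder R] [IsStrictOrderedRing R]
    (v : n → R) : 0 ≤ v ⬝ᵥ v :=
  Finset.sum_nonneg fun i _ => mul_self_nonneg (v i)

theorem ridge_objective_le {A : Matrix n n ℝ} (hA : A.PosSemidef) {t : ℝ} (ht : 0 ≤ t)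
    {Y a : n → ℝ} (ha : A *ᵥ a + t • a = Y) (x : n → ℝ) :
    (A *ᵥ a - Y) ⬝ᵥ (A *ᵥ a - Y) + t * (a ⬝ᵥ (A *ᵥ a)) ≤
      (A *ᵥ x - Y) ⬝ᵥ (A *ᵥ x - Y) + t * (x ⬝ᵥ (A *ᵥ x)) := by
  obtain ⟨d, rfl⟩ : ∃ d, x = a + d := ⟨x - a, by abel⟩
  subst ha
  have hsymm := hA.isHermitian.dotProduct_mulVec_comm a d
  have hd : 0 ≤ d ⬝ᵥ (A *ᵥ d) := hA.dotProduct_mulVec_nonneg d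
  simp only [mulVec_add, add_sub_add_left_eq_sub, sub_add_cancel_left, dotProduct_add,
    add_dotProduct, dotProduct_sub, sub_dotProduct, dotProduct_smul, smul_dotProduct, smul_eq_mul,
    dotProduct_neg, neg_dotProduct, dotProduct_comm (A *ᵥ d) a]
  nlinarith [dotProduct_self_nonneg (A *ᵥ d), mul_nonneg ht hd]

theorem ridge_shrinkage_le {K : Matrix n n ℝ} (hK : K.PosSemidef) {t : ℝ} {α w : n → ℝ}
    (hw : K *ᵥ w + t • w = K *ᵥ α) :
    w ⬝ᵥ (K *ᵥ w) + 2 * t * (w ⬝ᵥ w) ≤ α ⬝ᵥ (K *ᵥ α) := by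
  obtain ⟨d, rfl⟩ : ∃ d, α = w + d := ⟨α - w, by abel⟩
  have hKd : K *ᵥ d = t • w := by
    rw [mulVec_add] at hw; exact (add_left_cancel hw).symm
  have hsymm := hK.isHermitian.dotProduct_mulVec_comm w d
  have hd : 0 ≤ d ⬝ᵥ (K *ᵥ d) := hK.dotProduct_mulVec_nonneg d
  simp only [mulVec_add, dotProduct_add, add_dotProduct, hKd, dotProduct_smul, smul_eq_mul]
    at hsymm hd ⊢
  linarith

variable [DecidableEq n]

theorem Matrix.PosSemidef.add_smul_one_mulVec_inv_mulVec {A : Matrix n n ℝ} (hA : A.PosSemidef)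
    {t : ℝ} (ht : 0 < t) (y : n → ℝ) :
    A *ᵥ ((A + t • 1)⁻¹ *ᵥ y) + t • ((A + t • 1)⁻¹ *ᵥ y) = y := by
  have hdet : IsUnit (A + t • 1).det :=
    (isUnit_iff_isUnit_det _).mp (PosDef.posSemidef_add hA (PosDef.one.smul ht)).isUnit
  calc A *ᵥ ((A + t • 1)⁻¹ *ᵥ y) + t • ((A + t • 1)⁻¹ *ᵥ y)
      = (A + t • 1) *ᵥ ((A + t • 1)⁻¹ *ᵥ y) := by
        rw [add_mulVec, smul_mulVec, one_mulVec]
    _ = y := by rw [mulVec_mulVec, mul_nonsing_inv _ hdet, one_mulVec]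

theorem dotProduct_mulVec_self_le_of_loewner_abs_le {D : Matrix n n ℝ} {c : ℝ} (hc : 0 < c)
    (hle : (c • 1 - D).PosSemidef) (hge : (c • 1 + D).PosSemidef) (x : n → ℝ) :
    (D *ᵥ x) ⬝ᵥ (D *ᵥ x) ≤ c ^ 2 * (x ⬝ᵥ x) := by
  -- the forms of `cI - D` at `cx + Dx` and of `cI + D` at `cx - Dx` add up to `2c³‖x‖² - 2c‖Dx‖²`
  have hD : D.IsHermitian := by
    simpa using hge.isHermitian.sub (PosSemidef.one.smul hc.le).isHermitian
  set u := D *ᵥ x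
  have h₁ := hle.dotProduct_mulVec_nonneg (c • x + u)
  have h₂ := hge.dotProduct_mulVec_nonneg (c • x - u)
  have hsymm : x ⬝ᵥ (D *ᵥ u) = u ⬝ᵥ u := hD.dotProduct_mulVec_comm x u
  simp only [star_trivial, sub_mulVec, add_mulVec, smul_mulVec, one_mulVec, mulVec_add, mulVec_sub,
    mulVec_smul, dotProduct_add, dotProduct_sub, add_dotProduct, sub_dotProduct, dotProduct_smul,
    smul_dotProduct, smul_eq_mul, dotProduct_comm u x] at h₁ h₂
  nlinarith

end

section l2norm
variable {m : ℕ}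

theorem l2norm_nonneg (v : Fin m → ℝ) : 0 ≤ l2norm v := Real.sqrt_nonneg _

theorem l2norm_sq (v : Fin m → ℝ) : l2norm v ^ 2 = v ⬝ᵥ v := by
  rw [l2norm, Real.sq_sqrt (Finset.sum_nonneg fun i _ => sq_nonneg _)]
  simp [dotProduct, sq]

theorem l2norm_eq_norm (v : Fin m → ℝ) :
    l2norm v = ‖(WithLp.toLp 2 v : EuclideanSpace ℝ (Fin m))‖ := by
  simp [l2norm, EuclideanSpace.norm_eq]

theorem l2norm_add_le (u v : Fin m → ℝ) : l2norm (u + v) ≤ l2norm u + l2norm v := by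
  simpa only [l2norm_eq_norm, WithLp.toLp_add] using
    norm_add_le (WithLp.toLp 2 u) (WithLp.toLp 2 v)

theorem l2norm_sub_le (u v : Fin m → ℝ) : l2norm (u - v) ≤ l2norm u + l2norm v := by
  simpa only [l2norm_eq_norm, WithLp.toLp_sub] using
    norm_sub_le (WithLp.toLp 2 u) (WithLp.toLp 2 v)

theorem l2norm_smul (c : ℝ) (v : Fin m → ℝ) : l2norm (c • v) = |c| * l2norm v := by
  simpa only [l2norm_eq_norm, WithLp.toLp_smul, Real.norm_eq_abs] using
    norm_smul c (WithLp.toLp 2 v)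

theorem l2norm_mulVec_le_of_loewner_abs_le {D : Matrix (Fin m) (Fin m) ℝ} {c : ℝ}
    (hc : 0 < c) (hle : (c • 1 - D).PosSemidef) (hge : (c • 1 + D).PosSemidef)
    (x : Fin m → ℝ) : l2norm (D *ᵥ x) ≤ c * l2norm x := by
  rw [← sq_le_sq₀ (l2norm_nonneg _) (mul_nonneg hc.le (l2norm_nonneg _)), mul_pow,
    l2norm_sq, l2norm_sq]
  exact dotProduct_mulVec_self_le_of_loewner_abs_le hc hle hge x

end l2norm

theorem ridge_loss_le_of_loewner_close {m : ℕ} {K Kbar : Matrix (Fin m) (Fin m) ℝ}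
    (hK : K.PosSemidef) (hKbar : Kbar.PosSemidef) {t : ℝ} (ht : 0 < t)
    (hle : (t • 1 - (Kbar - K)).PosSemidef) (hge : (t • 1 + (Kbar - K)).PosSemidef)
    {Y a : Fin m → ℝ} (ha : Kbar *ᵥ a + t • a = Y) {α : Fin m → ℝ} {B : ℝ}
    (hα : α ⬝ᵥ (K *ᵥ α) ≤ B) :
    ∃ W, 2 * t * W ^ 2 ≤ B ∧
      l2norm (Kbar *ᵥ a - Y) ^ 2 ≤ (l2norm (K *ᵥ α - Y) + 2 * t * W) ^ 2 + t * B := by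
  set w := (K + t • 1)⁻¹ *ᵥ (K *ᵥ α)
  have hw : K *ᵥ w + t • w = K *ᵥ α := hK.add_smul_one_mulVec_inv_mulVec ht _
  have hshrink := ridge_shrinkage_le hK hw
  have hwKw : 0 ≤ w ⬝ᵥ (K *ᵥ w) := by simpa using hK.dotProduct_mulVec_nonneg w
  rw [← l2norm_sq] at hshrink
  refine ⟨l2norm w, by nlinarith, ?_⟩
  have hnorm : l2norm (Kbar *ᵥ w - Y) ≤ l2norm (K *ᵥ α - Y) + 2 * t * l2norm w := by
    have hdecomp : Kbar *ᵥ w - Y = (K *ᵥ α - Y) + ((Kbar - K) *ᵥ w - t • w) := by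
      rw [sub_mulVec, ← hw]; abel
    have hDw := l2norm_mulVec_le_of_loewner_abs_le ht hle hge w
    calc l2norm (Kbar *ᵥ w - Y)
        ≤ l2norm (K *ᵥ α - Y) + (l2norm ((Kbar - K) *ᵥ w) + l2norm (t • w)) := by
          rw [hdecomp]; exact (l2norm_add_le _ _).trans (add_le_add le_rfl (l2norm_sub_le _ _))
      _ ≤ _ := by rw [l2norm_smul, abs_of_pos ht]; linarith
  have hquad : w ⬝ᵥ (Kbar *ᵥ w) ≤ w ⬝ᵥ (K *ᵥ w) + t * l2norm w ^ 2 := by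
    have := hle.dotProduct_mulVec_nonneg w
    simp only [star_trivial, sub_mulVec, smul_mulVec, one_mulVec, dotProduct_sub, dotProduct_smul,
      smul_eq_mul] at this
    rw [l2norm_sq]; linarith
  have hopt := ridge_objective_le hKbar ht.le ha w
  have haKa : 0 ≤ a ⬝ᵥ (Kbar *ᵥ a) := by simpa using hKbar.dotProduct_mulVec_nonneg a
  rw [← l2norm_sq, ← l2norm_sq] at hopt
  have hnorm_sq := pow_le_pow_left₀ (l2norm_nonneg _) hnorm 2
  nlinarith [mul_le_mul_of_nonneg_left hquad ht.le, mul_nonneg ht.le haKa,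
    mul_nonneg (mul_nonneg ht.le ht.le) (sq_nonneg (l2norm w))]

theorem ridge_error_budget_le {m B ε t R W : ℝ} (hε0 : 0 < ε) (hε3 : ε ≤ 3) (ht : 0 ≤ t)
    (hR : R ^ 2 ≤ m) (hW : 2 * t * W ^ 2 ≤ B) (htB : 81 * t * B = ε ^ 2 * m) :
    (R + 2 * t * W) ^ 2 + t * B ≤ R ^ 2 + ε * m := by
  have htW : 2 * (t * W) ^ 2 ≤ t * B := by nlinarith [mul_le_mul_of_nonneg_left hW ht]
  have hyoung : ε * (4 * R * (t * W)) ≤ ε ^ 2 * R ^ 2 / 2 + 8 * (t * W) ^ 2 := by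
    nlinarith [sq_nonneg (ε * R - 4 * (t * W))]
  refine le_of_mul_le_mul_left ?_ hε0
  nlinarith [mul_le_mul_of_nonneg_left hR (sq_nonneg ε), mul_le_mul_of_nonneg_left htW hε0.le]

theorem total_error_general {m : ℕ} (hm : 0 < m) (B ε : ℝ) (hB : 0 < B)
    (hε0 : 0 < ε) (hε3 : ε ≤ 3)
    (lam η γ : ℝ) (hlam : lam = ε ^ 2 / (81 * B))
    (hη : η ≤ ε ^ 3 / (729 * B))
    (hγ0 : 0 < γ) (hγ : γ ≤ ε ^ 3 / (729 * B))
    (K : Matrix (Fin m) (Fin m) ℝ) (hK : K.PosSemidef)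
    (Kγ : Matrix (Fin m) (Fin m) ℝ) (hKγ : Kγ = K + (γ * m) • 1)
    (Kbar : Matrix (Fin m) (Fin m) ℝ) (hKbar : Kbar.PosSemidef)
    (hsand1 : (Kγ - Kbar).PosSemidef)
    (hsand2 : (Kbar + (η * m) • 1 - Kγ).PosSemidef)
    (Y : Fin m → ℝ)
    (αbarγ : Fin m → ℝ) (hαbarγ : αbarγ = (Kbar + (lam * m) • 1)⁻¹ *ᵥ Y)
    (αB : Fin m → ℝ) (hαB : αB ⬝ᵥ (K *ᵥ αB) ≤ B)
    (hloss : l2norm (K *ᵥ αB - Y) ≤ Real.sqrt m) :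
    (1 / m) * l2norm (Kbar *ᵥ αbarγ - Y) ^ 2 ≤
      (1 / m) * l2norm (K *ᵥ αB - Y) ^ 2 + ε := by
  have hm' : (0 : ℝ) < m := by exact_mod_cast hm
  subst hlam
  have hcube : ε ^ 3 / (729 * B) ≤ ε ^ 2 / (81 * B) := by
    rw [div_le_div_iff₀ (by positivity) (by positivity)]
    nlinarith [mul_nonneg (mul_nonneg (sq_nonneg ε) hB.le) (by linarith : 0 ≤ 9 - ε)]
  set t := ε ^ 2 / (81 * B) * m
  have ht : 0 < t := by positivity
  have htB : 81 * t * B = ε ^ 2 * m := by simp only [t]; field_simp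
  have hγt : γ * m ≤ t := mul_le_mul_of_nonneg_right (hγ.trans hcube) hm'.le
  have hηt : η * m ≤ t := mul_le_mul_of_nonneg_right (hη.trans hcube) hm'.le
  have hle : (t • 1 - (Kbar - K)).PosSemidef := by
    have : t • 1 - (Kbar - K) = (Kγ - Kbar) + (t - γ * m) • 1 := by rw [hKγ, sub_smul]; abel
    exact this ▸ hsand1.add (PosSemidef.one.smul (by linarith))
  have hge : (t • 1 + (Kbar - K)).PosSemidef := by
    have : t • 1 + (Kbar - K) = (Kbar + (η * m) • 1 - Kγ) + (t - η * m + γ * m) • 1 := by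
      rw [hKγ, add_smul, sub_smul]; abel
    exact this ▸ hsand2.add (PosSemidef.one.smul (by nlinarith))
  have ha : Kbar *ᵥ αbarγ + t • αbarγ = Y := hαbarγ ▸ hKbar.add_smul_one_mulVec_inv_mulVec ht Y
  obtain ⟨W, hW, hL⟩ := ridge_loss_le_of_loewner_close hK hKbar ht hle hge ha hαB
  have hR : l2norm (K *ᵥ αB - Y) ^ 2 ≤ m := by
    simpa [Real.sq_sqrt hm'.le] using pow_le_pow_left₀ (l2norm_nonneg _) hloss 2
  have hbudget := ridge_error_budget_le hε0 hε3 ht.le hR hW htB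
  calc (1 / m) * l2norm (Kbar *ᵥ αbarγ - Y) ^ 2
      ≤ (1 / m) * (l2norm (K *ᵥ αB - Y) ^ 2 + ε * m) := by gcongr; linarith
    _ = (1 / m) * l2norm (K *ᵥ αB - Y) ^ 2 + ε := by field_simp

/-- Total Error theorem (Theorem 8). -/
theorem total_error {m : ℕ} (hm : 0 < m) (B ε : ℝ) (hB : 0 < B)
    (hε0 : 0 < ε) (hε3 : ε ≤ 3)
    (lam η γ : ℝ) (hlam : lam = ε ^ 2 / (81 * B))
    (hη0 : 0 < η) (hη : η ≤ ε ^ 3 / (729 * B))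
    (hγ0 : 0 < γ) (hγ : γ ≤ ε ^ 3 / (729 * B))
    (K : Matrix (Fin m) (Fin m) ℝ) (hK : K.PosSemidef)
    (Kγ : Matrix (Fin m) (Fin m) ℝ) (hKγ : Kγ = K + (γ * m) • 1)
    (Kbar : Matrix (Fin m) (Fin m) ℝ) (hKbar : Kbar.PosSemidef)
    (hsand1 : (Kγ - Kbar).PosSemidef)
    (hsand2 : (Kbar + (η * m) • 1 - Kγ).PosSemidef)
    (Y : Fin m → ℝ) (hY : ∀ i, Y i ∈ Set.Icc (0 : ℝ) 1)
    (αbarγ : Fin m → ℝ) (hαbarγ : αbarγ = (Kbar + (lam * m) • 1)⁻¹ *ᵥ Y)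
    (αB : Fin m → ℝ) (hαB : αB ⬝ᵥ (K *ᵥ αB) ≤ B)
    (hloss : l2norm (K *ᵥ αB - Y) ≤ Real.sqrt m) :
    (1 / m) * l2norm (Kbar *ᵥ αbarγ - Y) ^ 2 ≤
      (1 / m) * l2norm (K *ᵥ αB - Y) ^ 2 + ε :=
  total_error_general hm B ε hB hε0 hε3 lam η γ hlam hη hγ0 hγ K hK Kγ hKγ Kbar hKbar hsand1 hsand2
    Y αbarγ hαbarγ αB hαB hloss
end

section
/- Let m be a positive integer, K a real symmetric positive semidefinite m×m matrix, γ > 0, η > 0 with γm ≤ η, and K_γ = K + γmI. Let λ₁ ≥ … ≥ λ_m be the eigenvalues of K in decreasing order (with multiplicity). Then for every integer j with 0 ≤ j ≤ m, tr(K_γ (K_γ + ηmI)⁻¹) ≤ j + 1 + (1/(ηm)) · Σ_{i=j+1}^{m} λ_i. -/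
open Matrix

/-- Spectral (operator 2-) norm of a real square matrix. -/
noncomputable def matSpectralNorm {m : ℕ} (A : Matrix (Fin m) (Fin m) ℝ) : ℝ :=
  ‖Matrix.toEuclideanCLM (𝕜 := ℝ) A‖

/-!
Diagonalising `K`, the effective dimension of `K_γ` is `∑ᵢ (λᵢ + γm) / (λᵢ + γm + ηm)`.
Each of the first `j` terms is at most `1`; each remaining term is at most `(λᵢ + γm) / (ηm)`,
and the `γm / (ηm)` parts of these add up to at most `m · γ / η ≤ 1`.
-/

open Finset

namespace Matrix.IsHermitian

variable {n 𝕜 : Type*} [Fintype n] [DecidableEq n] [RCLike 𝕜] {A : Matrix n n 𝕜}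

theorem trace_cfc (hA : A.IsHermitian) (f : ℝ → ℝ) :
    (cfc f A).trace = ∑ i, (f (hA.eigenvalues i) : 𝕜) := by
  rw [hA.cfc_eq, IsHermitian.cfc, Unitary.conjStarAlgAut_apply, trace_mul_cycle,
    Unitary.coe_star_mul_self, one_mul, trace_diagonal]
  rfl

theorem add_smul_one_mul_inv_eq_cfc (hA : A.IsHermitian) {a c : ℝ}
    (hc : ∀ i, hA.eigenvalues i + c ≠ 0) :
    (A + a • 1) * (A + c • 1)⁻¹ = cfc (fun x ↦ (x + a) / (x + c)) A := by
  have hspec : ∀ x ∈ spectrum ℝ A, x + c ≠ 0 := by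
    rw [hA.spectrum_real_eq_range_eigenvalues]
    rintro - ⟨i, rfl⟩
    exact hc i
  have hcont (f : ℝ → ℝ) : ContinuousOn f (spectrum ℝ A) :=
    (finite_real_spectrum (A := A)).continuousOn f
  have hA' : IsSelfAdjoint A := hA.isSelfAdjoint
  simp only [div_eq_mul_inv]
  rw [cfc_mul _ _ A (hcont _) (hcont _), cfc_inv _ A hspec (hcont _),
    cfc_add_const a (fun x ↦ x) A (hcont _) hA', cfc_add_const c (fun x ↦ x) A (hcont _) hA',
    cfc_id' ℝ A hA', nonsing_inv_eq_ringInverse, Algebra.algebraMap_eq_smul_one,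
    Algebra.algebraMap_eq_smul_one]

end Matrix.IsHermitian

theorem Fin.sum_filter_val_lt_le {m : ℕ} (j : ℕ) (f : Fin m → ℝ) (hf : ∀ i, f i ≤ 1) :
    ∑ i ∈ univ.filter (fun i : Fin m ↦ (i : ℕ) < j), f i ≤ j :=
  calc ∑ i ∈ univ.filter (fun i : Fin m ↦ (i : ℕ) < j), f i
      ≤ #(univ.filter (fun i : Fin m ↦ (i : ℕ) < j)) • (1 : ℝ) :=
        sum_le_card_nsmul _ _ _ fun i _ ↦ hf i
    _ ≤ j := by
        rw [Fin.card_filter_val_lt, nsmul_one]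
        exact_mod_cast min_le_right m j

theorem Finset.sum_add_div_add_add_le {ι : Type*} (s : Finset ι) {x : ι → ℝ}
    (hx : ∀ i ∈ s, 0 ≤ x i) {a b : ℝ} (ha : 0 ≤ a) (hb : 0 < b) (hab : #s * a ≤ b) :
    ∑ i ∈ s, (x i + a) / (x i + a + b) ≤ 1 + 1 / b * ∑ i ∈ s, x i :=
  calc ∑ i ∈ s, (x i + a) / (x i + a + b)
      ≤ ∑ i ∈ s, (x i + a) / b := by
        gcongr with i hi <;> linarith [hx i hi]
    _ = #s * a / b + 1 / b * ∑ i ∈ s, x i := by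
        rw [← sum_div, sum_add_distrib, sum_const, nsmul_eq_mul]
        ring
    _ ≤ 1 + 1 / b * ∑ i ∈ s, x i := by
        gcongr
        exact (div_le_one hb).2 hab

theorem effective_dimension_cutoff_bound_general {m : ℕ} (hm : 0 < m)
    (K : Matrix (Fin m) (Fin m) ℝ) (hK : K.PosSemidef)
    (η γ : ℝ) (hη : 0 < η) (hγ : 0 < γ) (hγm : γ * m ≤ η)
    (Kγ : Matrix (Fin m) (Fin m) ℝ) (hKγ : Kγ = K + (γ * m) • 1)
    (lam : Fin m → ℝ)
    (hperm : ∃ σ : Equiv.Perm (Fin m), ∀ i, lam i = hK.1.eigenvalues (σ i))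
    (j : ℕ) :
    (Kγ * (Kγ + (η * m) • 1)⁻¹).trace ≤
      (j : ℝ) + 1 + (1 / (η * m)) *
        ∑ i ∈ Finset.univ.filter (fun i : Fin m => j ≤ (i : ℕ)), lam i := by
  obtain ⟨σ, hσ⟩ := hperm
  have ha : 0 ≤ γ * m := by positivity
  have hb : 0 < η * m := mul_pos hη (Nat.cast_pos.2 hm)
  have hlam (i) : 0 ≤ lam i := hσ i ▸ hK.eigenvalues_nonneg _
  have hshift (i) : hK.1.eigenvalues i + (γ * m + η * m) ≠ 0 :=
    (add_pos_of_nonneg_of_pos (hK.eigenvalues_nonneg i) (by positivity)).ne'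
  have htrace : (Kγ * (Kγ + (η * m) • 1)⁻¹).trace =
      ∑ i, (lam i + γ * m) / (lam i + γ * m + η * m) := by
    rw [hKγ, add_assoc, ← add_smul, hK.1.add_smul_one_mul_inv_eq_cfc hshift, hK.1.trace_cfc,
      ← Equiv.sum_comp σ]
    simp only [hσ, add_assoc, RCLike.ofReal_real_eq_id, id]
  have hhead := Fin.sum_filter_val_lt_le j (fun i ↦ (lam i + γ * m) / (lam i + γ * m + η * m))
    fun i ↦ div_le_one_of_le₀ (le_add_of_nonneg_right hb.le) (by linarith [hlam i])
  have htail := (univ.filter fun i : Fin m ↦ j ≤ (i : ℕ)).sum_add_div_add_add_le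
    (fun i _ ↦ hlam i) ha hb <| calc
      #(univ.filter fun i : Fin m ↦ j ≤ (i : ℕ)) * (γ * m) ≤ m * (γ * m) := by
        gcongr; exact_mod_cast (card_filter_le _ _).trans_eq (card_fin m)
      _ = γ * m * m := by ring
      _ ≤ η * m := by gcongr
  rw [htrace, ← sum_filter_add_sum_filter_not univ fun i : Fin m ↦ (i : ℕ) < j]
  simp only [not_lt] at htail ⊢
  linarith

/-- Effective dimension is bounded by a cutoff plus the scaled eigenvalue tail sum
(key intermediate inequality in the proof of Theorem 9). -/
theorem effective_dimension_cutoff_bound {m : ℕ} (hm : 0 < m)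
    (K : Matrix (Fin m) (Fin m) ℝ) (hK : K.PosSemidef)
    (η γ : ℝ) (hη : 0 < η) (hγ : 0 < γ) (hγm : γ * m ≤ η)
    (Kγ : Matrix (Fin m) (Fin m) ℝ) (hKγ : Kγ = K + (γ * m) • 1)
    (lam : Fin m → ℝ) (hsort : Antitone lam)
    (hperm : ∃ σ : Equiv.Perm (Fin m), ∀ i, lam i = hK.1.eigenvalues (σ i))
    (j : ℕ) (hj : j ≤ m) :
    (Kγ * (Kγ + (η * m) • 1)⁻¹).trace ≤
      (j : ℝ) + 1 + (1 / (η * m)) *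
        ∑ i ∈ Finset.univ.filter (fun i : Fin m => j ≤ (i : ℕ)), lam i :=
  effective_dimension_cutoff_bound_general hm K hK η γ hη hγ hγm Kγ hKγ lam hperm j
end
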